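/- Let f : [0, ∞) → ℝ be continuous with f(0) = x, b ≥ a > 0, and suppose T_D(a) < ∞. Then the events {sup_{s ≤ T_D(a)} DU(s) ≥ b} and {T_U(b) < T_D(a)} coincide, where DU(s) = f(s) − inf_{r≤s} f(r). -/
import Mathlib

open Set ENNReal

noncomputable def DD (f : ℝ → ℝ) (t : ℝ) : ℝ := sSup (f '' Set.Icc 0 t) - f t
noncomputable def DU (f : ℝ → ℝ) (t : ℝ) : ℝ := f t - sInf (f '' Set.Icc 0 t)

/-- First time the process `g` hits level `a` (over `t ≥ 0`), with value `∞` if it never does. -/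
noncomputable def hitTime (g : ℝ → ℝ) (a : ℝ) : ℝ≥0∞ :=
  sInf {w : ℝ≥0∞ | ∃ t : ℝ, 0 ≤ t ∧ w = ENNReal.ofReal t ∧ g t = a}

section aux

variable {f : ℝ → ℝ}

lemma aux_ne (f : ℝ → ℝ) {t : ℝ} (ht : 0 ≤ t) : (f '' Set.Icc 0 t).Nonempty :=
  ⟨f 0, 0, by simp [ht], rfl⟩

lemma aux_bddAbove (hf : ContinuousOn f (Set.Ici 0)) {t : ℝ} :
    BddAbove (f '' Set.Icc 0 t) :=
  (isCompact_Icc.image_of_continuousOn (hf.mono (fun y hy => hy.1))).bddAbove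

lemma aux_bddBelow (hf : ContinuousOn f (Set.Ici 0)) {t : ℝ} :
    BddBelow (f '' Set.Icc 0 t) :=
  (isCompact_Icc.image_of_continuousOn (hf.mono (fun y hy => hy.1))).bddBelow

/-- continuity of the running supremum -/
lemma runSup_contOn (hf : ContinuousOn f (Set.Ici 0)) {T : ℝ} (hT : 0 ≤ T) :
    ContinuousOn (fun t => sSup (f '' Set.Icc 0 t)) (Set.Icc 0 T) := by
  rw [Metric.continuousOn_iff]
  intro t ht ε hε
  have hu : UniformContinuousOn f (Set.Icc 0 T) :=
    isCompact_Icc.uniformContinuousOn_of_continuous (hf.mono (fun y hy => hy.1))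
  rw [Metric.uniformContinuousOn_iff] at hu
  obtain ⟨δ, hδ, H⟩ := hu (ε / 2) (by linarith)
  refine ⟨δ, hδ, fun y hy hyd => ?_⟩
  have key : ∀ p ∈ Set.Icc (0:ℝ) T, ∀ q ∈ Set.Icc (0:ℝ) T, dist p q < δ →
      sSup (f '' Set.Icc 0 p) ≤ sSup (f '' Set.Icc 0 q) + ε / 2 := by
    intro p hp q hq hpq
    refine csSup_le ((aux_ne f hp.1).mono (Set.Subset.refl _)) ?_
    rintro z ⟨r, hr, rfl⟩
    rcases le_or_gt r q with h | h
    · have : f r ≤ sSup (f '' Set.Icc 0 q) :=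
        le_csSup (aux_bddAbove hf) ⟨r, ⟨hr.1, h⟩, rfl⟩
      linarith
    · have hrT : r ∈ Set.Icc (0:ℝ) T := ⟨hr.1, hr.2.trans hp.2⟩
      have hdrq : dist r q < δ := by
        rw [Real.dist_eq] at hpq ⊢
        have hrle : r ≤ p := hr.2
        have : r - q ≤ |p - q| := by
          rcases abs_cases (p - q) with ⟨h1, _⟩ | ⟨h1, _⟩ <;> linarith
        rw [abs_of_pos (by linarith : (0:ℝ) < r - q)]
        linarith
      have := H r hrT q hq hdrq
      rw [Real.dist_eq] at this
      have h2 : f q ≤ sSup (f '' Set.Icc 0 q) :=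
        le_csSup (aux_bddAbove hf) ⟨q, ⟨hq.1, le_refl q⟩, rfl⟩
      rcases abs_cases (f r - f q) with ⟨h1, _⟩ | ⟨h1, _⟩ <;> linarith
  have h1 := key y hy t ht hyd
  have h2 := key t ht y hy (by rwa [dist_comm])
  rw [Real.dist_eq]
  rcases abs_cases (sSup (f '' Set.Icc 0 y) - sSup (f '' Set.Icc 0 t)) with ⟨h3, _⟩ | ⟨h3, _⟩ <;>
    linarith

lemma runInf_contOn (hf : ContinuousOn f (Set.Ici 0)) {T : ℝ} (hT : 0 ≤ T) :
    ContinuousOn (fun t => sInf (f '' Set.Icc 0 t)) (Set.Icc 0 T) := by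
  have hnf : ContinuousOn (fun s => -f s) (Set.Ici 0) := hf.neg
  have h := (runSup_contOn hnf hT).neg
  have heq : ∀ t : ℝ, 0 ≤ t →
      sInf (f '' Set.Icc 0 t) = -sSup ((fun s => -f s) '' Set.Icc 0 t) := by
    intro t ht
    have : (fun s => -f s) '' Set.Icc 0 t = -(f '' Set.Icc 0 t) := by
      ext z; simp [Set.mem_neg, Set.mem_image]
      constructor
      · rintro ⟨r, hr, rfl⟩; exact ⟨r, hr, by ring⟩
      · rintro ⟨r, hr, hz⟩; exact ⟨r, hr, by linarith⟩
    rw [this, Real.sInf_def]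
  refine ContinuousOn.congr h ?_
  intro t ht
  exact heq t ht.1

lemma DU_contOn (hf : ContinuousOn f (Set.Ici 0)) {T : ℝ} (hT : 0 ≤ T) :
    ContinuousOn (DU f) (Set.Icc 0 T) :=
  ((hf.mono (fun y hy => hy.1)).sub (runInf_contOn hf hT))

lemma DD_contOn (hf : ContinuousOn f (Set.Ici 0)) {T : ℝ} (hT : 0 ≤ T) :
    ContinuousOn (DD f) (Set.Icc 0 T) :=
  ((runSup_contOn hf hT).sub (hf.mono (fun y hy => hy.1)))

lemma DD_zero (f : ℝ → ℝ) : DD f 0 = 0 := by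
  simp [DD, Set.Icc_self]

lemma DU_zero (f : ℝ → ℝ) : DU f 0 = 0 := by
  simp [DU, Set.Icc_self]

end aux

theorem stmt_5 (f : ℝ → ℝ) (x : ℝ) (hf : ContinuousOn f (Set.Ici 0)) (hx : f 0 = x)
    (a b : ℝ) (ha : 0 < a) (hab : a ≤ b) (tDa : ℝ)
    (hTDa : IsLeast {t : ℝ | 0 ≤ t ∧ DD f t = a} tDa) :
    b ≤ sSup (DU f '' Set.Icc 0 tDa) ↔ hitTime (DU f) b < ENNReal.ofReal tDa := by
  obtain ⟨⟨hT0, hTa⟩, hTle⟩ := hTDa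
  have hb : 0 < b := lt_of_lt_of_le ha hab
  have hTpos : 0 < tDa := by
    rcases hT0.lt_or_eq with h | h
    · exact h
    · exfalso; rw [← h] at hTa; rw [DD_zero] at hTa; linarith
  have hDUcont : ContinuousOn (DU f) (Set.Icc 0 tDa) := DU_contOn hf hT0
  have hDUbdd : BddAbove (DU f '' Set.Icc 0 tDa) :=
    (isCompact_Icc.image_of_continuousOn hDUcont).bddAbove
  constructor
  · -- forward direction
    intro hsup
    -- Step 1: find c ∈ [0, tDa) with b ≤ DU f c
    have step1 : ∃ c, 0 ≤ c ∧ c < tDa ∧ b ≤ DU f c := by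
      by_contra hcon
      push_neg at hcon
      -- so DU f t < b for all t ∈ [0, tDa)
      have hlt : ∀ t, 0 ≤ t → t < tDa → DU f t < b := fun t h1 h2 =>
        hcon t h1 h2
      -- sup attained
      obtain ⟨t0, ht0, hsSup⟩ := isCompact_Icc.exists_sSup_image_eq
        (Set.nonempty_Icc.2 hT0) hDUcont
      have hDUT : b ≤ DU f tDa := by
        rcases ht0.2.lt_or_eq with h | h
        · exfalso; have := hlt t0 ht0.1 h; rw [← hsSup] at this; linarith
        · rw [h] at hsSup; rw [← hsSup]; exact hsup
      -- max and min of f attained on [0, tDa]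
      obtain ⟨s, hs, hsSupf⟩ := isCompact_Icc.exists_sSup_image_eq
        (Set.nonempty_Icc.2 hT0) (hf.mono (fun y hy => hy.1))
      obtain ⟨u, hu, hsInff⟩ := isCompact_Icc.exists_sInf_image_eq
        (Set.nonempty_Icc.2 hT0) (hf.mono (fun y hy => hy.1))
      -- DD f tDa = a means f s - f tDa = a
      have hM : f s = f tDa + a := by
        have : sSup (f '' Set.Icc 0 tDa) - f tDa = a := hTa
        linarith [hsSupf ▸ this]
      have hm : f tDa - f u ≥ b := by
        have : f tDa - sInf (f '' Set.Icc 0 tDa) ≥ b := hDUT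
        linarith [hsInff ▸ this]
      have hsT : s < tDa := by
        rcases hs.2.lt_or_eq with h | h
        · exact h
        · exfalso; rw [h] at hM; linarith
      have huT : u < tDa := by
        rcases hu.2.lt_or_eq with h | h
        · exact h
        · exfalso; rw [h] at hm; linarith
      rcases le_or_gt u s with hus | hsu
      · -- case u ≤ s : DU f s ≥ a + b > b, contradiction with s < tDa
        have h1 : sInf (f '' Set.Icc 0 s) ≤ f u :=
          csInf_le (aux_bddBelow hf) ⟨u, ⟨hu.1, hus⟩, rfl⟩
        have h2 : DU f s ≥ a + b := by
          have : DU f s = f s - sInf (f '' Set.Icc 0 s) := rfl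
          rw [this, hM]; linarith
        have := hlt s hs.1 hsT
        linarith
      · -- case s < u : DD f u ≥ a + b > a, IVT gives earlier hit of a
        have h1 : f s ≤ sSup (f '' Set.Icc 0 u) :=
          le_csSup (aux_bddAbove hf) ⟨s, ⟨hs.1, hsu.le⟩, rfl⟩
        have h2 : DD f u ≥ a + b := by
          have : DD f u = sSup (f '' Set.Icc 0 u) - f u := rfl
          rw [this]; linarith [hM]
        have hDDc : ContinuousOn (DD f) (Set.Icc 0 u) := DD_contOn hf hu.1
        have hmem : a ∈ Set.Icc (DD f 0) (DD f u) := by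
          rw [DD_zero]; constructor <;> [linarith; linarith]
        obtain ⟨t', ht', hat'⟩ := intermediate_value_Icc hu.1 hDDc hmem
        have := hTle ⟨ht'.1, hat'⟩
        linarith [ht'.2]
    obtain ⟨c, hc0, hcT, hcb⟩ := step1
    -- IVT on [0, c] : DU f 0 = 0 < b ≤ DU f c
    have hDUc : ContinuousOn (DU f) (Set.Icc 0 c) := DU_contOn hf hc0
    have hmem : b ∈ Set.Icc (DU f 0) (DU f c) := by
      rw [DU_zero]; exact ⟨hb.le, hcb⟩
    obtain ⟨t0, ht0, hbt0⟩ := intermediate_value_Icc hc0 hDUc hmem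
    rw [hitTime, sInf_lt_iff]
    refine ⟨ENNReal.ofReal t0, ⟨t0, ht0.1, rfl, hbt0⟩, ?_⟩
    exact ENNReal.ofReal_lt_ofReal_iff hTpos |>.2 (lt_of_le_of_lt ht0.2 hcT)
  · -- backward direction
    intro hhit
    rw [hitTime, sInf_lt_iff] at hhit
    obtain ⟨w, ⟨t, ht0, rfl, hdub⟩, hlt⟩ := hhit
    have htT : t < tDa := by
      rw [ENNReal.ofReal_lt_ofReal_iff hTpos] at hlt
      exact hlt
    have : DU f t ∈ DU f '' Set.Icc 0 tDa := ⟨t, ⟨ht0, htT.le⟩, rfl⟩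
    rw [← hdub]
    exact le_csSup hDUbdd this
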